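/- arXiv:1804.09701 — 4 statements merged into one kernel-verified Lean document; each statement's English description precedes it below -/
import Mathlib

section
/- Let b_l, b_m be distinct basis vectors and g an automorphism of G(V) with g(b_l) = b_m and g(b_m) = b_l. If u is a vertex with b_l ∈ S_u and b_m ∉ S_u, then b_l ∉ S_{g(u)} and b_m ∈ S_{g(u)}. -/
open Finset

/-- Vertices of the non-zero component graph: nonzero vectors of `V = (Fin n → ZMod 2)`. -/
abbrev Vtx (n : ℕ) := {v : Fin n → ZMod 2 // v ≠ 0}

/-- The support (skeleton) of a vector: basis vectors with nonzero coefficient. -/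
def supp {n : ℕ} (v : Fin n → ZMod 2) : Finset (Fin n) :=
  Finset.univ.filter (fun i => v i ≠ 0)

/-- The non-zero component graph of an `n`-dimensional vector space over `F_2`:
two distinct nonzero vectors are adjacent iff their supports intersect. -/
def NZC (n : ℕ) : SimpleGraph (Vtx n) where
  Adj u v := u ≠ v ∧ ∃ i, u.1 i ≠ 0 ∧ v.1 i ≠ 0
  symm := by
    constructor
    rintro u v ⟨h1, i, h2, h3⟩
    exact ⟨h1.symm, i, h3, h2⟩
  loopless := by
    constructor
    rintro u ⟨h, -⟩
    exact h rfl

/-!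
A vertex `v` has `i` in its support exactly when it equals or is adjacent to the vertex whose
support is `{i}`. Graph automorphisms preserve "equal or adjacent", so an automorphism sending the
vertex with support `{i}` to the one with support `{j}` turns `i ∈ S_v` into `j ∈ S_{g(v)}`.
-/

theorem mem_supp_iff {n : ℕ} (v : Fin n → ZMod 2) (i : Fin n) : i ∈ supp v ↔ v i ≠ 0 := by
  simp [supp]

theorem mem_supp_iff_eq_or_adj {n : ℕ} {b : Vtx n} {i : Fin n} (hb : supp b.1 = {i})
    (v : Vtx n) : i ∈ supp v.1 ↔ v = b ∨ (NZC n).Adj v b := by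
  have hbi : b.1 i ≠ 0 := (mem_supp_iff _ _).1 (hb ▸ mem_singleton_self i)
  constructor
  · intro hv
    by_cases hvb : v = b
    · exact Or.inl hvb
    · exact Or.inr ⟨hvb, i, (mem_supp_iff _ _).1 hv, hbi⟩
  · rintro (rfl | ⟨-, j, hvj, hbj⟩)
    · simp [hb]
    · obtain rfl : j = i := mem_singleton.1 (hb ▸ (mem_supp_iff _ _).2 hbj)
      exact (mem_supp_iff _ _).2 hvj

theorem mem_supp_iso_apply_iff {n : ℕ} {b b' : Vtx n} {i j : Fin n} (hb : supp b.1 = {i})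
    (hb' : supp b'.1 = {j}) (g : NZC n ≃g NZC n) (hg : g b = b') (v : Vtx n) :
    j ∈ supp (g v).1 ↔ i ∈ supp v.1 := by
  rw [mem_supp_iff_eq_or_adj hb', mem_supp_iff_eq_or_adj hb, ← hg, g.injective.eq_iff,
    g.map_adj_iff]

theorem swap_supp_one_general (n : ℕ) (l m : Fin n)
    (bl bm : Vtx n) (hbl : supp bl.1 = {l}) (hbm : supp bm.1 = {m})
    (g : NZC n ≃g NZC n) (h1 : g bl = bm) (h2 : g bm = bl)
    (u : Vtx n) (hu1 : l ∈ supp u.1) (hu2 : m ∉ supp u.1) :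
    l ∉ supp (g u).1 ∧ m ∈ supp (g u).1 :=
  ⟨fun hl => hu2 ((mem_supp_iso_apply_iff hbm hbl g h2 u).1 hl),
    (mem_supp_iso_apply_iff hbl hbm g h1 u).2 hu1⟩

/-- If `g` swaps the basis vectors `b_l, b_m` and `b_l ∈ S_u`, `b_m ∉ S_u`, then
`b_l ∉ S_{g(u)}` and `b_m ∈ S_{g(u)}`. -/
theorem swap_supp_one (n : ℕ) (hn : 3 ≤ n) (l m : Fin n) (hlm : l ≠ m)
    (bl bm : Vtx n) (hbl : supp bl.1 = {l}) (hbm : supp bm.1 = {m})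
    (g : NZC n ≃g NZC n) (h1 : g bl = bm) (h2 : g bm = bl)
    (u : Vtx n) (hu1 : l ∈ supp u.1) (hu2 : m ∉ supp u.1) :
    l ∉ supp (g u).1 ∧ m ∈ supp (g u).1 :=
  swap_supp_one_general n l m bl bm hbl hbm g h1 h2 u hu1 hu2
end

section
/- Let u, v be vertices of G(V) with |S_u| = |S_v| and let g be an automorphism of G(V) with g(u) = v and g(v) = u. If b is a basis vector in S_u ∩ S_v, then g(b) ∈ S_u ∩ S_v; and if b ∈ S_u \ S_v, then g(b) ∈ S_v \ S_u. -/
open Finset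

/-!
An automorphism preserves the basis vectors, since these are exactly the vertices whose
neighbourhood is a clique. For a basis vector `b = e_i` the vertices adjacent or equal to `b` are
those whose support contains `i`; hence if `g e_i = e_j`, then `i ∈ S_w ↔ j ∈ S_{g w}` for every
vertex `w`. Applied to `w = u` and `w = v`, which `g` swaps, this gives both claims.
-/

open SimpleGraph

@[simp]
lemma mem_supp {n : ℕ} {v : Fin n → ZMod 2} {i : Fin n} : i ∈ supp v ↔ v i ≠ 0 := by
  simp [supp]

lemma SimpleGraph.Iso.isClique_image {α β : Type*} {G : SimpleGraph α} {H : SimpleGraph β}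
    (g : G ≃g H) {s : Set α} (hs : G.IsClique s) : H.IsClique (g '' s) := by
  rintro _ ⟨y, hy, rfl⟩ _ ⟨z, hz, rfl⟩ hne
  exact g.map_adj_iff.mpr (hs hy hz fun h => hne (congrArg g h))

namespace NZC

variable {n : ℕ}

def single (i : Fin n) : Vtx n :=
  ⟨Pi.single i 1, by simp⟩

lemma single_apply_ne_zero {i k : Fin n} : (single i).1 k ≠ 0 ↔ k = i := by
  by_cases h : k = i <;> simp [single, h]

lemma eq_of_supp_eq_singleton {x : Vtx n} {i k : Fin n} (hx : supp x.1 = {i})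
    (hk : x.1 k ≠ 0) : k = i := by
  simpa [hx] using mem_supp.mpr hk

lemma adj_or_eq_iff_mem_supp {x w : Vtx n} {i : Fin n} (hx : supp x.1 = {i}) :
    ((NZC n).Adj x w ∨ x = w) ↔ i ∈ supp w.1 := by
  have hxi : x.1 i ≠ 0 := mem_supp.mp (hx ▸ mem_singleton_self i)
  constructor
  · rintro (⟨-, k, hxk, hwk⟩ | rfl)
    · exact mem_supp.mpr (eq_of_supp_eq_singleton hx hxk ▸ hwk)
    · exact mem_supp.mpr hxi
  · intro hw
    by_cases h : x = w
    · exact Or.inr h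
    · exact Or.inl ⟨h, i, hxi, mem_supp.mp hw⟩

lemma isClique_neighborSet_of_supp_eq_singleton {x : Vtx n} {i : Fin n}
    (hx : supp x.1 = {i}) : (NZC n).IsClique ((NZC n).neighborSet x) := by
  rintro y ⟨-, k, hxk, hyk⟩ z ⟨-, l, hxl, hzl⟩ hyz
  exact ⟨hyz, i, eq_of_supp_eq_singleton hx hxk ▸ hyk, eq_of_supp_eq_singleton hx hxl ▸ hzl⟩

lemma exists_supp_eq_singleton_of_isClique_neighborSet {x : Vtx n}
    (hx : (NZC n).IsClique ((NZC n).neighborSet x)) : ∃ i, supp x.1 = {i} := by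
  obtain ⟨i, hi⟩ := Function.ne_iff.mp x.2
  refine ⟨i, eq_singleton_iff_unique_mem.mpr ⟨mem_supp.mpr hi, fun j hj => ?_⟩⟩
  by_contra hji
  have hj : x.1 j ≠ 0 := mem_supp.mp hj
  -- `e_i` and `e_j` are distinct non-adjacent neighbours of `x`.
  have hxi : (NZC n).Adj x (single i) :=
    ⟨fun h => hji (single_apply_ne_zero.mp (h ▸ hj)), i, hi, single_apply_ne_zero.mpr rfl⟩
  have hxj : (NZC n).Adj x (single j) :=
    ⟨fun h => hji (single_apply_ne_zero.mp (h ▸ hi)).symm, j, hj, single_apply_ne_zero.mpr rfl⟩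
  have hne : single i ≠ single j := fun h =>
    hji (single_apply_ne_zero.mp (h ▸ single_apply_ne_zero.mpr rfl)).symm
  obtain ⟨-, k, hik, hjk⟩ := hx hxi hxj hne
  exact hji ((single_apply_ne_zero.mp hjk).symm.trans (single_apply_ne_zero.mp hik))

lemma exists_supp_apply_eq_singleton (g : NZC n ≃g NZC n) {b : Vtx n} {i : Fin n}
    (hb : supp b.1 = {i}) : ∃ j, supp (g b).1 = {j} := by
  apply exists_supp_eq_singleton_of_isClique_neighborSet
  rw [← g.image_neighborSet]
  exact g.isClique_image (isClique_neighborSet_of_supp_eq_singleton hb)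

lemma mem_supp_apply_iff (g : NZC n ≃g NZC n) {b : Vtx n} {i j : Fin n}
    (hb : supp b.1 = {i}) (hgb : supp (g b).1 = {j}) (w : Vtx n) :
    j ∈ supp (g w).1 ↔ i ∈ supp w.1 := by
  rw [← adj_or_eq_iff_mem_supp hb, ← adj_or_eq_iff_mem_supp hgb, g.map_adj_iff,
    g.injective.eq_iff]

end NZC

theorem swap_skeleton_general (n : ℕ) (u v : Vtx n)
    (g : NZC n ≃g NZC n) (hgu : g u = v) (hgv : g v = u)
    (b : Vtx n) (i : Fin n) (hb : supp b.1 = {i}) :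
    (i ∈ supp u.1 ∩ supp v.1 → ∃ j, supp (g b).1 = {j} ∧ j ∈ supp u.1 ∩ supp v.1) ∧
    (i ∈ supp u.1 \ supp v.1 → ∃ j, supp (g b).1 = {j} ∧ j ∈ supp v.1 \ supp u.1) := by
  obtain ⟨j, hj⟩ := NZC.exists_supp_apply_eq_singleton g hb
  have hu := NZC.mem_supp_apply_iff g hb hj u
  have hv := NZC.mem_supp_apply_iff g hb hj v
  rw [hgu] at hu
  rw [hgv] at hv
  refine ⟨fun hi => ⟨j, hj, ?_⟩, fun hi => ⟨j, hj, ?_⟩⟩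
  · rw [mem_inter] at hi ⊢
    exact ⟨hv.mpr hi.2, hu.mpr hi.1⟩
  · rw [mem_sdiff] at hi ⊢
    exact ⟨hu.mpr hi.1, fun h => hi.2 (hv.mp h)⟩

/-- If `g` swaps `u` and `v` (with equal support sizes), then a basis vector in
`S_u ∩ S_v` is mapped to a basis vector in `S_u ∩ S_v`, and a basis vector in
`S_u \ S_v` is mapped to a basis vector in `S_v \ S_u`. -/
theorem swap_skeleton (n : ℕ) (hn : 3 ≤ n) (u v : Vtx n)
    (hcard : (supp u.1).card = (supp v.1).card)
    (g : NZC n ≃g NZC n) (hgu : g u = v) (hgv : g v = u)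
    (b : Vtx n) (i : Fin n) (hb : supp b.1 = {i}) :
    (i ∈ supp u.1 ∩ supp v.1 → ∃ j, supp (g b).1 = {j} ∧ j ∈ supp u.1 ∩ supp v.1) ∧
    (i ∈ supp u.1 \ supp v.1 → ∃ j, supp (g b).1 = {j} ∧ j ∈ supp v.1 \ supp u.1) :=
  swap_skeleton_general n u v g hgu hgv b i hb
end

section
/- Let u, v be distinct vertices of G(V) with |S_u| = |S_v|, and let w be a vertex with |S_w ∩ S_u| ≠ |S_w ∩ S_v|. Then every automorphism g of G(V) fixing w satisfies g(u) ≠ v. -/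
open Finset

/-!
In the complement of `G(V)` two vertices are adjacent exactly when their supports are disjoint,
so the common neighbours of `w` and `u` there are the nonzero vectors supported off
`S_w ∪ S_u`; there are `2 ^ (n - |S_w ∪ S_u|) - 1` of them. An automorphism fixing `w` and
sending `u` to `v` preserves this count, hence `|S_w ∪ S_u| = |S_w ∪ S_v|`, and together with
`|S_u| = |S_v|` inclusion–exclusion gives `|S_w ∩ S_u| = |S_w ∩ S_v|`.
-/

namespace SimpleGraph

variable {V W : Type*} {G : SimpleGraph V} {G' : SimpleGraph W}

def Iso.compl (f : G ≃g G') : Gᶜ ≃g G'ᶜ :=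
  ⟨f.toEquiv, by simp [compl_adj, f.injective.ne_iff, f.map_adj_iff]⟩

@[simp]
theorem Iso.compl_apply (f : G ≃g G') (a : V) : f.compl a = f a := rfl

theorem Iso.ncard_commonNeighbors (f : G ≃g G') (a b : V) :
    (G'.commonNeighbors (f a) (f b)).ncard = (G.commonNeighbors a b).ncard := by
  have hpre : f ⁻¹' G'.commonNeighbors (f a) (f b) = G.commonNeighbors a b := by
    ext x
    simp [mem_commonNeighbors, f.map_adj_iff]
  rw [← hpre, Set.ncard_preimage_of_injective_subset_range f.injective]
  simp [f.surjective.range_eq]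

end SimpleGraph

section Support

variable {n : ℕ}

theorem supp_injective : Function.Injective (supp : (Fin n → ZMod 2) → Finset (Fin n)) := by
  intro x y h
  have hxy : ∀ a b : ZMod 2, (a ≠ 0 ↔ b ≠ 0) → a = b := by decide
  funext i
  exact hxy _ _ (by simpa [supp] using congrArg (i ∈ ·) h)

theorem supp_bijective : Function.Bijective (supp : (Fin n → ZMod 2) → Finset (Fin n)) :=
  (Fintype.bijective_iff_injective_and_card _).mpr ⟨supp_injective, by simp⟩

theorem supp_nonempty (x : Vtx n) : (supp x.1).Nonempty := by
  obtain ⟨i, hi⟩ := Function.ne_iff.mp x.2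
  exact ⟨i, by simpa [supp] using hi⟩

theorem ncard_setOf_disjoint_supp (A : Finset (Fin n)) :
    {x : Fin n → ZMod 2 | Disjoint (supp x) A}.ncard = 2 ^ (n - #A) := by
  have hpre : {x : Fin n → ZMod 2 | Disjoint (supp x) A} =
      supp ⁻¹' (Aᶜ.powerset : Set (Finset (Fin n))) := by
    ext x
    simp only [Set.mem_ofPred_eq, Set.mem_preimage, Finset.mem_coe, Finset.mem_powerset,
      Finset.subset_compl_iff_disjoint_right]
  rw [hpre, Set.ncard_preimage_of_injective_subset_range supp_injective
    (by simp [supp_bijective.surjective.range_eq]), Set.ncard_coe_finset, card_powerset,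
    card_compl, Fintype.card_fin]

end Support

namespace NZC

variable {n : ℕ}

theorem compl_adj_iff {x y : Vtx n} : (NZC n)ᶜ.Adj x y ↔ Disjoint (supp x.1) (supp y.1) := by
  rw [SimpleGraph.compl_adj, Finset.disjoint_left]
  by_cases hxy : x = y
  · subst hxy
    obtain ⟨i, hi⟩ := supp_nonempty x
    simp only [ne_eq, not_true_eq_false, false_and, false_iff, not_forall, not_not]
    exact ⟨i, hi, hi⟩
  · simp [NZC, hxy, supp]

theorem mem_compl_commonNeighbors_iff {w u x : Vtx n} :
    x ∈ (NZC n)ᶜ.commonNeighbors w u ↔ Disjoint (supp x.1) (supp w.1 ∪ supp u.1) := by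
  rw [SimpleGraph.mem_commonNeighbors, compl_adj_iff, compl_adj_iff, disjoint_union_right,
    disjoint_comm, disjoint_comm (a := supp u.1)]

theorem ncard_compl_commonNeighbors_add_one (w u : Vtx n) :
    ((NZC n)ᶜ.commonNeighbors w u).ncard + 1 = 2 ^ (n - #(supp w.1 ∪ supp u.1)) := by
  have himage : Subtype.val '' (NZC n)ᶜ.commonNeighbors w u =
      {x : Fin n → ZMod 2 | Disjoint (supp x) (supp w.1 ∪ supp u.1)} \ {0} := by
    ext x
    simp [mem_compl_commonNeighbors_iff, and_comm]
  rw [← ncard_setOf_disjoint_supp, ← Set.ncard_image_of_injective _ Subtype.val_injective,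
    himage, Set.ncard_sdiff_singleton_add_one]
  simp [supp]

theorem card_supp_union_eq_sub_log (w u : Vtx n) :
    #(supp w.1 ∪ supp u.1) = n - Nat.log 2 (((NZC n)ᶜ.commonNeighbors w u).ncard + 1) := by
  rw [ncard_compl_commonNeighbors_add_one, Nat.log_pow (by norm_num)]
  have := (supp w.1 ∪ supp u.1).card_le_univ
  simp only [Fintype.card_fin] at this
  omega

end NZC

theorem fixing_neighborhood_general (n : ℕ) (u v : Vtx n)
    (hcard : (supp u.1).card = (supp v.1).card) (w : Vtx n)
    (hw : (supp w.1 ∩ supp u.1).card ≠ (supp w.1 ∩ supp v.1).card)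
    (g : NZC n ≃g NZC n) (hg : g w = w) : g u ≠ v := by
  rintro rfl
  have hunion : #(supp w.1 ∪ supp u.1) = #(supp w.1 ∪ supp (g u).1) := by
    have hinv := g.compl.ncard_commonNeighbors w u
    rw [SimpleGraph.Iso.compl_apply, SimpleGraph.Iso.compl_apply, hg] at hinv
    rw [NZC.card_supp_union_eq_sub_log, NZC.card_supp_union_eq_sub_log, hinv]
  have hu := card_union_add_card_inter (supp w.1) (supp u.1)
  have hv := card_union_add_card_inter (supp w.1) (supp (g u).1)
  omega

/-- If `|S_w ∩ S_u| ≠ |S_w ∩ S_v|`, then no automorphism fixing `w` maps `u` to `v`. -/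
theorem fixing_neighborhood (n : ℕ) (hn : 3 ≤ n) (u v : Vtx n) (huv : u ≠ v)
    (hcard : (supp u.1).card = (supp v.1).card) (w : Vtx n)
    (hw : (supp w.1 ∩ supp u.1).card ≠ (supp w.1 ∩ supp v.1).card)
    (g : NZC n ≃g NZC n) (hg : g w = w) : g u ≠ v :=
  fixing_neighborhood_general n u v hcard w hw g hg
end

section
/- Let G(V) be the non-zero component graph of an n-dimensional vector space V (n ≥ 3) over F_2. Then fxd(G(V)) = 2^{n−1}, i.e., every subset of vertices of size 2^{n−1} is a fixing set, and there is a non-fixing subset of size 2^{n−1} − 1 (namely A = {x : both b_l, b_m ∈ S_x or both b_l, b_m ∉ S_x} for any two distinct basis vectors b_l, b_m). -/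
open Finset

/-- `D` is a fixing set of `G` if the only automorphism of `G` fixing
every vertex of `D` is the identity. -/
def IsFixingSet {V : Type*} (G : SimpleGraph V) (D : Set V) : Prop :=
  ∀ g : G ≃g G, (∀ v ∈ D, g v = v) → ∀ v, g v = v

/-- The fixing number: minimum cardinality of a fixing set. -/
noncomputable def fixingNumber {V : Type*} [Fintype V] (G : SimpleGraph V) : ℕ :=
  sInf {k | ∃ D : Finset V, D.card = k ∧ IsFixingSet G ↑D}

/-- The fixed number: minimum `k` such that every `k`-subset of vertices is a fixing set. -/
noncomputable def fixedNumber {V : Type*} [Fintype V] (G : SimpleGraph V) : ℕ :=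
  sInf {k | ∀ D : Finset V, D.card = k → IsFixingSet G ↑D}

/-
An automorphism of `G(V)` preserves inclusion of closed neighbourhoods, and `N[u] ⊆ N[w]` holds
exactly when `supp u ⊆ supp w`. Hence it preserves support inclusion and permutes the basis
vectors, which are the minimal vertices. If it moves `e l` to `e m`, then every vertex it fixes
contains both or neither of `l`, `m` in its support; these vertices, with `0`, form the hyperplane
`x l = x m` of size `2 ^ (n - 1)`. So no `2 ^ (n - 1)` vertices are fixed by a nontrivial
automorphism, while the coordinate swap `(l m)` fixes the hyperplane pointwise and moves `e l`.
-/

theorem ZMod.two_ne_zero_iff_ne_zero_iff_eq : ∀ a b : ZMod 2, (a ≠ 0 ↔ b ≠ 0) ↔ a = b := by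
  decide

theorem natCard_setOf_apply_eq_apply {ι : Type*} [Fintype ι] [DecidableEq ι] {l m : ι}
    (hlm : l ≠ m) : Nat.card {v : ι → ZMod 2 | v l = v m} = 2 ^ (Fintype.card ι - 1) := by
  set f : (ι → ZMod 2) →ₗ[ZMod 2] ZMod 2 :=
    LinearMap.proj (R := ZMod 2) (φ := fun _ => ZMod 2) l - LinearMap.proj m
  have hf : Function.Surjective f := fun a => ⟨Pi.single l a, by simp [f, hlm.symm]⟩
  have hrank := LinearMap.finrank_range_add_finrank_ker f
  rw [LinearMap.range_eq_top.mpr hf, finrank_top, Module.finrank_self,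
    Module.finrank_fintype_fun_eq_card] at hrank
  have hker : {v : ι → ZMod 2 | v l = v m} = (LinearMap.ker f : Set (ι → ZMod 2)) := by
    ext v
    simp [f, sub_eq_zero]
  rw [hker, SetLike.coe_sort_coe, Module.natCard_eq_pow_finrank (K := ZMod 2), Nat.card_zmod]
  congr 1
  omega

theorem SimpleGraph.Iso.eq_or_adj_iff {V W : Type*} {G : SimpleGraph V} {G' : SimpleGraph W}
    (g : G ≃g G') {u w : V} : g u = g w ∨ G'.Adj (g u) (g w) ↔ u = w ∨ G.Adj u w := by
  rw [g.injective.eq_iff, g.map_adj_iff]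

theorem IsFixingSet.mono {V : Type*} {G : SimpleGraph V} {D D' : Set V} (hD : IsFixingSet G D)
    (h : D ⊆ D') : IsFixingSet G D' :=
  fun g hg => hD g fun v hv => hg v (h hv)

theorem fixedNumber_eq {V : Type*} [Fintype V] {G : SimpleGraph V} {k : ℕ}
    (hfix : ∀ D : Finset V, D.card = k → IsFixingSet G ↑D) {A : Set V}
    (hA : ¬ IsFixingSet G A) (hAk : A.ncard + 1 = k) : fixedNumber G = k := by
  refine IsLeast.csInf_eq ⟨hfix, fun j hj => ?_⟩
  by_contra! hjk
  obtain ⟨t, htA, htj⟩ := Set.exists_subset_card_eq (s := A) (n := j) (by omega)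
  have ht : IsFixingSet G ↑t.toFinite.toFinset :=
    hj _ (by rw [← htj, Set.ncard_eq_toFinset_card])
  exact hA ((t.toFinite.coe_toFinset ▸ ht).mono htA)

namespace NZC

variable {n : ℕ}

theorem mem_supp {v : Fin n → ZMod 2} {i : Fin n} : i ∈ supp v ↔ v i ≠ 0 := by
  simp [supp]

theorem supp_injective : Function.Injective (supp (n := n)) := fun u v h =>
  funext fun i => (ZMod.two_ne_zero_iff_ne_zero_iff_eq _ _).mp (by simp only [← mem_supp, h])

theorem supp_nonempty (u : Vtx n) : (supp u.1).Nonempty := by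
  by_contra! h
  exact u.2 (funext fun i => by simpa [mem_supp] using Finset.eq_empty_iff_forall_notMem.mp h i)

def basisVtx (i : Fin n) : Vtx n := ⟨Pi.single i 1, by simp⟩

theorem supp_basisVtx (i : Fin n) : supp (basisVtx i).1 = {i} := by
  ext j
  simp [mem_supp, basisVtx, Pi.single_apply]

theorem basisVtx_injective : Function.Injective (basisVtx (n := n)) := fun i j h => by
  simpa [supp_basisVtx] using congrArg (fun v : Vtx n => supp v.1) h

theorem eq_or_adj_iff {u w : Vtx n} :
    u = w ∨ (NZC n).Adj u w ↔ ¬ Disjoint (supp u.1) (supp w.1) := by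
  rw [Finset.not_disjoint_iff]
  simp only [mem_supp]
  refine ⟨?_, fun h => or_iff_not_imp_left.mpr fun huw => ⟨huw, h⟩⟩
  rintro (rfl | ⟨-, h⟩)
  · obtain ⟨i, hi⟩ := supp_nonempty u
    exact ⟨i, mem_supp.mp hi, mem_supp.mp hi⟩
  · exact h

-- The right-hand side says that the closed neighbourhood of `u` lies in that of `w`.
theorem supp_subset_iff_forall_eq_or_adj {u w : Vtx n} :
    supp u.1 ⊆ supp w.1 ↔ ∀ x, u = x ∨ (NZC n).Adj u x → w = x ∨ (NZC n).Adj w x := by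
  simp only [eq_or_adj_iff]
  refine ⟨fun h x hux hwx => hux (hwx.mono_left h), fun h i hi => ?_⟩
  simpa [supp_basisVtx] using h (basisVtx i) (by simpa [supp_basisVtx] using hi)

theorem supp_map_subset_iff (g : NZC n ≃g NZC n) {u w : Vtx n} :
    supp (g u).1 ⊆ supp (g w).1 ↔ supp u.1 ⊆ supp w.1 := by
  rw [supp_subset_iff_forall_eq_or_adj, supp_subset_iff_forall_eq_or_adj, g.surjective.forall]
  simp only [g.eq_or_adj_iff]

theorem exists_eq_basisVtx_iff {u : Vtx n} :
    (∃ i, u = basisVtx i) ↔ ∀ w : Vtx n, supp w.1 ⊆ supp u.1 → w = u := by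
  constructor
  · rintro ⟨i, rfl⟩ w hw
    rw [supp_basisVtx, Finset.subset_singleton_iff] at hw
    exact Subtype.ext (supp_injective
      ((hw.resolve_left (supp_nonempty w).ne_empty).trans (supp_basisVtx i).symm))
  · intro h
    obtain ⟨i, hi⟩ := supp_nonempty u
    exact ⟨i, (h _ (by simpa [supp_basisVtx] using hi)).symm⟩

theorem exists_map_basisVtx_eq (g : NZC n ≃g NZC n) (i : Fin n) :
    ∃ j, g (basisVtx i) = basisVtx j := by
  refine exists_eq_basisVtx_iff.mpr fun w hw => ?_
  rw [← g.apply_symm_apply w, supp_map_subset_iff] at hw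
  rw [← exists_eq_basisVtx_iff.mp ⟨i, rfl⟩ _ hw, g.apply_symm_apply]

theorem mem_supp_map_iff (g : NZC n ≃g NZC n) {i j : Fin n} (hij : g (basisVtx i) = basisVtx j)
    (v : Vtx n) : j ∈ supp (g v).1 ↔ i ∈ supp v.1 := by
  rw [← singleton_subset_iff, ← singleton_subset_iff, ← supp_basisVtx, ← supp_basisVtx, ← hij,
    supp_map_subset_iff]

def coordsAgree (l m : Fin n) : Set (Vtx n) := {x | l ∈ supp x.1 ↔ m ∈ supp x.1}

theorem mem_coordsAgree_iff {l m : Fin n} {x : Vtx n} : x ∈ coordsAgree l m ↔ x.1 l = x.1 m := by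
  change (l ∈ supp x.1 ↔ m ∈ supp x.1) ↔ _
  rw [mem_supp, mem_supp, ZMod.two_ne_zero_iff_ne_zero_iff_eq]

theorem exists_setOf_fixed_subset_coordsAgree (g : NZC n ≃g NZC n) (hg : ∃ v, g v ≠ v) :
    ∃ l m, l ≠ m ∧ {v | g v = v} ⊆ coordsAgree l m := by
  choose σ hσ using exists_map_basisVtx_eq g
  by_cases hσid : ∀ i, σ i = i
  · obtain ⟨v, hv⟩ := hg
    refine absurd (Subtype.ext (supp_injective (Finset.ext fun i => ?_))) hv
    simpa [hσid] using mem_supp_map_iff g (hσ i) v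
  · obtain ⟨l, hl⟩ := not_forall.mp hσid
    refine ⟨l, σ l, Ne.symm hl, fun v hv => ?_⟩
    change l ∈ supp v.1 ↔ σ l ∈ supp v.1
    rw [← mem_supp_map_iff g (hσ l), hv]

def permAut (σ : Equiv.Perm (Fin n)) : NZC n ≃g NZC n where
  toFun v := ⟨v.1 ∘ σ, fun h => v.2 (σ.surjective.injective_comp_right h)⟩
  invFun v := ⟨v.1 ∘ σ.symm, fun h => v.2 (σ.symm.surjective.injective_comp_right h)⟩
  left_inv v := by ext; simp
  right_inv v := by ext; simp
  map_rel_iff' := by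
    intro u w
    change (_ ≠ _ ∧ ∃ i, u.1 (σ i) ≠ 0 ∧ w.1 (σ i) ≠ 0) ↔ (u ≠ w ∧ ∃ i, u.1 i ≠ 0 ∧ w.1 i ≠ 0)
    refine and_congr (not_congr ?_) (σ.surjective.exists (p := fun i => u.1 i ≠ 0 ∧ w.1 i ≠ 0)).symm
    exact Equiv.apply_eq_iff_eq _

theorem permAut_swap_apply_of_mem_coordsAgree {l m : Fin n} {v : Vtx n} (hv : v ∈ coordsAgree l m) :
    permAut (Equiv.swap l m) v = v := by
  rw [mem_coordsAgree_iff] at hv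
  refine Subtype.ext (funext fun i => ?_)
  change v.1 (Equiv.swap l m i) = v.1 i
  rw [Equiv.swap_apply_def]
  split_ifs with hl hm
  exacts [hl ▸ hv.symm, hm ▸ hv, rfl]

theorem permAut_swap_basisVtx (l m : Fin n) :
    permAut (Equiv.swap l m) (basisVtx l) = basisVtx m := by
  refine Subtype.ext (funext fun i => ?_)
  change (Pi.single l 1 : Fin n → ZMod 2) (Equiv.swap l m i) = (Pi.single m 1 : Fin n → ZMod 2) i
  simp [Pi.single_apply, Equiv.swap_apply_eq_iff]

theorem not_isFixingSet_coordsAgree {l m : Fin n} (hlm : l ≠ m) :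
    ¬ IsFixingSet (NZC n) (coordsAgree l m) := fun h =>
  hlm <| basisVtx_injective <| ((permAut_swap_basisVtx l m).symm.trans
    (h _ (fun _ => permAut_swap_apply_of_mem_coordsAgree) (basisVtx l))).symm

theorem isFixingSet_of_forall_not_subset_coordsAgree {D : Set (Vtx n)}
    (hD : ∀ l m, l ≠ m → ¬ D ⊆ coordsAgree l m) : IsFixingSet (NZC n) D := by
  intro g hg
  by_contra! hmoved
  obtain ⟨l, m, hlm, hfixed⟩ := exists_setOf_fixed_subset_coordsAgree g hmoved
  exact hD l m hlm fun v hv => hfixed (hg v hv)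

theorem ncard_coordsAgree {l m : Fin n} (hlm : l ≠ m) :
    (coordsAgree l m).ncard = 2 ^ (n - 1) - 1 := by
  have himage : Subtype.val '' coordsAgree l m = {v : Fin n → ZMod 2 | v l = v m} \ {0} := by
    ext v
    simp [mem_coordsAgree_iff, and_comm]
  rw [← Set.ncard_image_of_injective _ Subtype.val_injective, himage,
    Set.ncard_sdiff_singleton_of_mem (by simp), ← Nat.card_coe_set_eq,
    natCard_setOf_apply_eq_apply hlm, Fintype.card_fin]

theorem isFixingSet_of_two_pow_le_ncard {D : Set (Vtx n)} (hD : 2 ^ (n - 1) ≤ D.ncard) :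
    IsFixingSet (NZC n) D := by
  refine isFixingSet_of_forall_not_subset_coordsAgree fun l m hlm hsub => ?_
  have := Set.ncard_le_ncard hsub
  rw [ncard_coordsAgree hlm] at this
  have := Nat.one_le_two_pow (n := n - 1)
  omega

end NZC

open NZC

/-- `fxd(G(V)) = 2^(n-1)`: every subset of `2^(n-1)` vertices is a fixing set, and for any
two distinct basis vectors `b_l, b_m` the set `A` of vertices containing both or neither
of `b_l, b_m` in their support is a non-fixing set of cardinality `2^(n-1) - 1`. -/
theorem fxd_NZC (n : ℕ) (hn : 3 ≤ n) :
    (∀ D : Finset (Vtx n), D.card = 2 ^ (n - 1) → IsFixingSet (NZC n) ↑D) ∧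
    fixedNumber (NZC n) = 2 ^ (n - 1) ∧
    ∀ l m : Fin n, l ≠ m →
      ¬ IsFixingSet (NZC n) {x : Vtx n | l ∈ supp x.1 ↔ m ∈ supp x.1} ∧
      Set.ncard {x : Vtx n | l ∈ supp x.1 ↔ m ∈ supp x.1} = 2 ^ (n - 1) - 1 := by
  have hfix : ∀ D : Finset (Vtx n), D.card = 2 ^ (n - 1) → IsFixingSet (NZC n) ↑D :=
    fun D hD => isFixingSet_of_two_pow_le_ncard (by rw [Set.ncard_coe_finset, hD])
  have h01 : (⟨0, by omega⟩ : Fin n) ≠ ⟨1, by omega⟩ := by simp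
  refine ⟨hfix, fixedNumber_eq hfix (not_isFixingSet_coordsAgree h01) ?_,
    fun l m hlm => ⟨not_isFixingSet_coordsAgree hlm, ncard_coordsAgree hlm⟩⟩
  rw [ncard_coordsAgree h01]
  have := Nat.one_le_two_pow (n := n - 1)
  omega
end
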